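/- arXiv:1502.03529 — 2 statements merged into one kernel-verified Lean document; each statement's English description precedes it below -/
import Mathlib

section
/- If each g_i is ν-Lipschitz, then for the variance-reduced vector p_i = g_i(w) − g_i(w₀) + G(w₀) with G(w₀) = (1/n)∑ᵢ g_i(w₀), and for any point x, one has (1/n)∑ᵢ‖p_i‖² ≤ 2ν²‖w − x‖² + 2ν²‖w₀ − x‖² + ‖G(w)‖², where G(w) = (1/n)∑ᵢ g_i(w). -/
open scoped RealInnerProductSpace
open Finset

/-! Write `p i = (d i - m) + G w` with `d i = g i w - g i w₀` and `m = G w - G w₀` the mean of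
the `d i`. Since the `d i - m` sum to zero, the cross terms cancel and
`∑ ‖p i‖² = ∑ ‖d i - m‖² + n ‖G w‖²`; the variance `∑ ‖d i - m‖²` is at most the second moment
`∑ ‖d i‖² ≤ n ν² ‖w - w₀‖²`, and `‖w - w₀‖² ≤ 2 ‖w - x‖² + 2 ‖w₀ - x‖²`. -/

section SumOfSquares

variable {ι E : Type*} [NormedAddCommGroup E] [InnerProductSpace ℝ E] (s : Finset ι)

theorem sum_norm_add_sq_of_sum_eq_zero {v : ι → E} (hv : ∑ i ∈ s, v i = 0) (c : E) :
    ∑ i ∈ s, ‖v i + c‖ ^ 2 = ∑ i ∈ s, ‖v i‖ ^ 2 + #s * ‖c‖ ^ 2 := by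
  have hcross : ∑ i ∈ s, 2 * ⟪v i, c⟫ = 0 := by
    rw [← mul_sum, ← sum_inner, hv, inner_zero_left, mul_zero]
  simp only [norm_add_sq_real, sum_add_distrib, hcross, sum_const, nsmul_eq_mul, add_zero]

theorem sum_norm_sub_sq_of_sum_eq_card_smul {u : ι → E} {m : E}
    (hm : ∑ i ∈ s, u i = (#s : ℝ) • m) :
    ∑ i ∈ s, ‖u i - m‖ ^ 2 = ∑ i ∈ s, ‖u i‖ ^ 2 - #s * ‖m‖ ^ 2 := by
  have hcross : ∑ i ∈ s, 2 * ⟪u i, m⟫ = 2 * #s * ‖m‖ ^ 2 := by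
    rw [← mul_sum, ← sum_inner, hm, real_inner_smul_left, real_inner_self_eq_norm_sq, mul_assoc]
  simp only [norm_sub_sq_real, sum_add_distrib, sum_sub_distrib, hcross, sum_const, nsmul_eq_mul]
  ring

theorem sum_sub_eq_zero_of_sum_eq_card_smul {u : ι → E} {m : E}
    (hm : ∑ i ∈ s, u i = (#s : ℝ) • m) : ∑ i ∈ s, (u i - m) = 0 := by
  rw [sum_sub_distrib, hm, sum_const, Nat.cast_smul_eq_nsmul, sub_self]

end SumOfSquares

theorem norm_sub_sq_le_two_mul_add {E : Type*} [SeminormedAddCommGroup E] (a b x : E) :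
    ‖a - b‖ ^ 2 ≤ 2 * ‖a - x‖ ^ 2 + 2 * ‖b - x‖ ^ 2 := by
  have htri : ‖a - b‖ ≤ ‖a - x‖ + ‖b - x‖ := by
    simpa only [norm_sub_rev x b] using norm_sub_le_norm_sub_add_norm_sub a x b
  calc ‖a - b‖ ^ 2 ≤ (‖a - x‖ + ‖b - x‖) ^ 2 := by gcongr
    _ ≤ 2 * ‖a - x‖ ^ 2 + 2 * ‖b - x‖ ^ 2 := by linarith [add_sq_le (a := ‖a - x‖) (b := ‖b - x‖)]

/-- Variance bound for the variance-reduced vector relative to an arbitrary point `x`. -/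
theorem variance_bound_three_points {p n : ℕ} (hn : 0 < n)
    (g : Fin n → EuclideanSpace ℝ (Fin p) → EuclideanSpace ℝ (Fin p))
    (G : EuclideanSpace ℝ (Fin p) → EuclideanSpace ℝ (Fin p))
    (hG : ∀ z, G z = (n : ℝ)⁻¹ • ∑ i, g i z)
    (ν : ℝ) (hlip : ∀ i a b, ‖g i a - g i b‖ ≤ ν * ‖a - b‖)
    (w w₀ x : EuclideanSpace ℝ (Fin p)) :
    (n : ℝ)⁻¹ * ∑ i, ‖g i w - g i w₀ + G w₀‖ ^ 2
      ≤ 2 * ν ^ 2 * ‖w - x‖ ^ 2 + 2 * ν ^ 2 * ‖w₀ - x‖ ^ 2 + ‖G w‖ ^ 2 := by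
  have hnpos : (0 : ℝ) < n := Nat.cast_pos.mpr hn
  set d := fun i => g i w - g i w₀
  set m := G w - G w₀
  have hmean : ∑ i, d i = ((univ : Finset (Fin n)).card : ℝ) • m := by
    simp only [d, m, card_univ, Fintype.card_fin, hG, ← smul_sub, smul_inv_smul₀ hnpos.ne',
      sum_sub_distrib]
  have hsecond : ∑ i, ‖d i‖ ^ 2 ≤ n * (ν ^ 2 * ‖w - w₀‖ ^ 2) := by
    simpa using sum_le_card_nsmul univ (fun i => ‖d i‖ ^ 2) _ fun i _ => by
      simpa only [← mul_pow] using pow_le_pow_left₀ (norm_nonneg _) (hlip i w w₀) 2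
  have hsplit : ∑ i, ‖g i w - g i w₀ + G w₀‖ ^ 2
      = ∑ i, ‖d i‖ ^ 2 - n * ‖m‖ ^ 2 + n * ‖G w‖ ^ 2 := by
    have hp : ∀ i, g i w - g i w₀ + G w₀ = (d i - m) + G w := fun i => by simp only [d, m]; abel
    simp only [hp, sum_norm_add_sq_of_sum_eq_zero _ (sum_sub_eq_zero_of_sum_eq_card_smul _ hmean),
      sum_norm_sub_sq_of_sum_eq_card_smul _ hmean, card_univ, Fintype.card_fin]
  calc (n : ℝ)⁻¹ * ∑ i, ‖g i w - g i w₀ + G w₀‖ ^ 2 ≤ ν ^ 2 * ‖w - w₀‖ ^ 2 + ‖G w‖ ^ 2 := by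
        rw [inv_mul_le_iff₀ hnpos, hsplit]
        linarith [mul_nonneg hnpos.le (sq_nonneg ‖m‖)]
    _ ≤ ν ^ 2 * (2 * ‖w - x‖ ^ 2 + 2 * ‖w₀ - x‖ ^ 2) + ‖G w‖ ^ 2 := by
        gcongr
        exact norm_sub_sq_le_two_mul_add w w₀ x
    _ = 2 * ν ^ 2 * ‖w - x‖ ^ 2 + 2 * ν ^ 2 * ‖w₀ - x‖ ^ 2 + ‖G w‖ ^ 2 := by ring
end

section
/- Let β_{t+1} = β_t + ρ(Ax_{t+1} + By_{t+1} − c) and α_{t+1} = β_t + ρ(Ax_{t+1} + By_t − c) with ρ > 0. Then for any α ∈ ℝ^l: −(Ax_{t+1} + By_{t+1} − c)ᵀ(α_{t+1} − α) ≤ (1/(2ρ))(‖β_t − α‖² − ‖β_{t+1} − α‖²) + (ρ/2)‖y_t − y_{t+1}‖²_H, where H = BᵀB. -/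
open scoped RealInnerProductSpace BigOperators
open Matrix Finset

noncomputable section

/-- Multiplication of a matrix with a Euclidean vector. -/
def mv {l p : ℕ} (A : Matrix (Fin l) (Fin p) ℝ)
    (x : EuclideanSpace ℝ (Fin p)) : EuclideanSpace ℝ (Fin l) :=
  (WithLp.equiv 2 (Fin l → ℝ)).symm (A.mulVec ((WithLp.equiv 2 (Fin p → ℝ)) x))

/-- Dual-variable estimate (Lemma on the estimation of `α_{t+1}` in the ADMM
convergence analysis). -/
theorem dual_variable_estimate {l p q : ℕ} (ρ : ℝ) (hρ : 0 < ρ)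
    (A : Matrix (Fin l) (Fin p) ℝ) (B : Matrix (Fin l) (Fin q) ℝ)
    (c : EuclideanSpace ℝ (Fin l))
    (x₁ : EuclideanSpace ℝ (Fin p)) (y₀ y₁ : EuclideanSpace ℝ (Fin q))
    (β₀ β₁ α₁ : EuclideanSpace ℝ (Fin l))
    (hβ : β₁ = β₀ + ρ • (mv A x₁ + mv B y₁ - c))
    (hα : α₁ = β₀ + ρ • (mv A x₁ + mv B y₀ - c)) :
    ∀ α : EuclideanSpace ℝ (Fin l),
      -⟪mv A x₁ + mv B y₁ - c, α₁ - α⟫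
        ≤ 1 / (2 * ρ) * (‖β₀ - α‖ ^ 2 - ‖β₁ - α‖ ^ 2)
          + ρ / 2 * ‖mv B (y₀ - y₁)‖ ^ 2 := by
  intro α
  have hw : mv B (y₀ - y₁) = mv B y₀ - mv B y₁ := by
    simp [mv, Matrix.mulVec_sub]
  have hαd : α₁ - α = (β₁ - α) + ρ • mv B (y₀ - y₁) := by
    rw [hα, hβ, hw]; module
  have hv : β₁ - β₀ = ρ • (mv A x₁ + mv B y₁ - c) := by rw [hβ]; abel
  have hr : mv A x₁ + mv B y₁ - c = ρ⁻¹ • (β₁ - β₀) := by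
    rw [hv, smul_smul, inv_mul_cancel₀ hρ.ne', one_smul]
  set r := mv A x₁ + mv B y₁ - c with hrdef
  set w := mv B (y₀ - y₁) with hwdef
  set a := β₁ - α with hadef
  set v := β₁ - β₀ with hvdef
  have key : -⟪r, α₁ - α⟫ = -(ρ⁻¹ * ⟪v, a⟫) - ρ * (ρ⁻¹ * ⟪v, w⟫) := by
    rw [hαd, inner_add_right, inner_smul_right, hr, real_inner_smul_left,
      real_inner_smul_left]
    ring
  have hba : β₀ - α = a - v := by rw [hadef, hvdef]; abel
  have h1 : 2 * ⟪v, a⟫ = ‖v‖ ^ 2 + ‖a‖ ^ 2 - ‖β₀ - α‖ ^ 2 := by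
    have h := norm_sub_sq_real a v
    rw [hba, real_inner_comm a v] at *
    linarith
  have h2 : (0 : ℝ) ≤ ‖v + ρ • w‖ ^ 2 := sq_nonneg _
  have h3 : ‖v + ρ • w‖ ^ 2 = ‖v‖ ^ 2 + 2 * (ρ * ⟪v, w⟫) + ρ ^ 2 * ‖w‖ ^ 2 := by
    rw [norm_add_sq_real, real_inner_smul_right, norm_smul, Real.norm_eq_abs,
      abs_of_pos hρ, mul_pow]
  rw [h3] at h2
  rw [key]
  have hρ' : ρ ≠ 0 := hρ.ne'
  have e1 : -(ρ⁻¹ * ⟪v, a⟫) - ρ * (ρ⁻¹ * ⟪v, w⟫)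
      = (-(2 * ⟪v, a⟫) - 2 * (ρ * ⟪v, w⟫)) / (2 * ρ) := by
    field_simp
  have e2 : 1 / (2 * ρ) * (‖β₀ - α‖ ^ 2 - ‖a‖ ^ 2) + ρ / 2 * ‖w‖ ^ 2
      = (‖β₀ - α‖ ^ 2 - ‖a‖ ^ 2 + ρ ^ 2 * ‖w‖ ^ 2) / (2 * ρ) := by
    field_simp
  rw [e1, e2]
  apply div_le_div_of_nonneg_right _ (by positivity)
  linarith
end
end
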